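/- Let n and c be positive integers. Let T be a random variable uniformly distributed on {0,1}^n, and let M be a random variable jointly distributed with T that takes at most 2^c distinct values. Then the expected one-way discrepancy of the inner-product (mod 2) function against the message M is exponentially small: E_{m∼M}[ 2^{−n} ∑_{x∈{0,1}^n} | E[ (−1)^{⟨x,T⟩} | M=m ] | ] ≤ 2^{−(n−c)/2}, where ⟨x,T⟩ = ∑_{i=1}^n x_i T_i mod 2. -/

import Mathlib

noncomputable section
open scoped Classical
open Finset

/-- Probability of an event under a probability mass function `p` on a finite sample space. -/
def prEvt {Ω : Type*} [Fintype Ω] (p : Ω → ℝ) (E : Set Ω) : ℝ :=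
  ∑ ω, if ω ∈ E then p ω else 0

/-- Conditional probability of `E` given `F`. -/
def cprEvt {Ω : Type*} [Fintype Ω] (p : Ω → ℝ) (E F : Set Ω) : ℝ :=
  prEvt p (E ∩ F) / prEvt p F

/-- The `±1` value `(-1)^{⟨x,v⟩}` of the inner product (mod 2) of `x, v ∈ {0,1}ⁿ`. -/
def ipSign {n : ℕ} (x v : Fin n → ZMod 2) : ℝ :=
  if (∑ i, x i * v i : ZMod 2) = 0 then 1 else -1

lemma zmod2_cases : ∀ a : ZMod 2, a = 0 ∨ a = 1 := by decide
lemma sign_mul_sign (a b : ZMod 2) :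
    ((if a = 0 then (1:ℝ) else -1) * (if b = 0 then 1 else -1)) =
      if a + b = 0 then 1 else -1 := by
  rcases zmod2_cases a with ha | ha <;> rcases zmod2_cases b with hb | hb <;>
    subst ha <;> subst hb <;> split_ifs <;>
    simp_all [show ((1:ZMod 2)+1=0) from by decide, show ((1:ZMod 2) ≠ 0) from by decide]
lemma ipSign_mul {n : ℕ} (x v w : Fin n → ZMod 2) :
    ipSign x v * ipSign x w = ipSign x (v + w) := by
  unfold ipSign
  have h : (∑ i, x i * (v + w) i : ZMod 2) = (∑ i, x i * v i) + ∑ i, x i * w i := by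
    rw [← Finset.sum_add_distrib]; congr 1; funext i; simp [mul_add]
  rw [h, sign_mul_sign]
lemma ipSign_sum {n : ℕ} (w : Fin n → ZMod 2) :
    ∑ x : Fin n → ZMod 2, ipSign x w = if w = 0 then (2:ℝ)^n else 0 := by
  by_cases hw : w = 0
  · subst hw
    simp only [ipSign]
    have : ∀ x : Fin n → ZMod 2, (∑ i, x i * (0 : Fin n → ZMod 2) i : ZMod 2) = 0 := by
      intro x; simp
    simp only [this, if_true, Finset.sum_const, nsmul_eq_mul, mul_one]
    simp [Fintype.card_fun]
  · rw [if_neg hw]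
    obtain ⟨i, hi⟩ : ∃ i, w i ≠ 0 := by
      by_contra h; push_neg at h; exact hw (funext fun i => h i)
    have hwi : w i = 1 := (zmod2_cases (w i)).resolve_left hi
    set e : Fin n → ZMod 2 := fun j => if j = i then 1 else 0 with he
    have key : ∀ x : Fin n → ZMod 2, ipSign (x + e) w = - ipSign x w := by
      intro x
      unfold ipSign
      have : (∑ j, (x + e) j * w j : ZMod 2) = (∑ j, x j * w j) + 1 := by
        have : ∀ j, (x + e) j * w j = x j * w j + e j * w j := by
          intro j; simp [add_mul]
        rw [Finset.sum_congr rfl fun j _ => this j, Finset.sum_add_distrib]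
        congr 1
        rw [Finset.sum_eq_single i]
        · simp [he, hwi]
        · intro b _ hb; simp [he, hb]
        · simp
      rw [this]
      generalize (∑ j, x j * w j : ZMod 2) = a
      rcases zmod2_cases a with ha | ha <;> subst ha <;>
        simp [show ((0:ZMod 2)+1 ≠ 0) from by decide, show ((1:ZMod 2)+1 = 0) from by decide,
          show ((1:ZMod 2) ≠ 0) from by decide]
    have hsum : ∑ x : Fin n → ZMod 2, ipSign x w
        = ∑ x : Fin n → ZMod 2, ipSign (x + e) w :=
      (Fintype.sum_equiv (Equiv.addRight e) _ _ (fun x => rfl)).symm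
    have : ∑ x : Fin n → ZMod 2, ipSign x w = - ∑ x : Fin n → ZMod 2, ipSign x w := by
      conv_lhs => rw [hsum]
      rw [Finset.sum_congr rfl fun x _ => key x, Finset.sum_neg_distrib]
    linarith
lemma vadd_eq_zero {n : ℕ} (v w : Fin n → ZMod 2) : v + w = 0 ↔ w = v := by
  have h2 : ∀ a b : ZMod 2, (a + b = 0 ↔ b = a) := by decide
  constructor
  · intro h; funext j; exact (h2 (v j) (w j)).1 (congrFun h j)
  · intro h; subst h; funext j; exact (h2 (w j) (w j)).2 rfl
lemma parseval {n : ℕ} (q : (Fin n → ZMod 2) → ℝ) :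
    ∑ x : Fin n → ZMod 2, (∑ v, q v * ipSign x v)^2 = 2^n * ∑ v, (q v)^2 := by
  have step : ∀ x : Fin n → ZMod 2, (∑ v, q v * ipSign x v)^2
      = ∑ v, ∑ w, q v * q w * ipSign x (v + w) := by
    intro x
    rw [sq, Finset.sum_mul_sum]
    refine Finset.sum_congr rfl fun v _ => Finset.sum_congr rfl fun w _ => ?_
    rw [← ipSign_mul]; ring
  rw [Finset.sum_congr rfl fun x _ => step x]
  rw [Finset.sum_comm]
  have swap2 : ∀ v : Fin n → ZMod 2,
      ∑ x : Fin n → ZMod 2, ∑ w, q v * q w * ipSign x (v + w)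
      = ∑ w, q v * q w * ∑ x : Fin n → ZMod 2, ipSign x (v + w) := by
    intro v
    rw [Finset.sum_comm]
    exact Finset.sum_congr rfl fun w _ => (Finset.mul_sum _ _ _).symm
  rw [Finset.sum_congr rfl fun v _ => swap2 v]
  have collapse : ∀ v : Fin n → ZMod 2,
      ∑ w, q v * q w * ∑ x : Fin n → ZMod 2, ipSign x (v + w) = q v ^ 2 * 2 ^ n := by
    intro v
    have : ∀ w : Fin n → ZMod 2,
        q v * q w * ∑ x : Fin n → ZMod 2, ipSign x (v + w)
        = if w = v then q v * q v * 2 ^ n else 0 := by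
      intro w
      rw [ipSign_sum]
      by_cases h : w = v
      · subst h; rw [if_pos ((vadd_eq_zero _ _).2 rfl), if_pos rfl]
      · rw [if_neg (fun hh => h ((vadd_eq_zero _ _).1 hh)), if_neg h, mul_zero]
    rw [Finset.sum_congr rfl fun w _ => this w]
    rw [Finset.sum_ite_eq' Finset.univ v (fun _ => q v * q v * (2:ℝ) ^ n)]
    simp [sq]
  rw [Finset.sum_congr rfl fun v _ => collapse v, ← Finset.sum_mul]
  ring
lemma prEvt_nonneg {Ω : Type*} [Fintype Ω] {p : Ω → ℝ} (hp : ∀ ω, 0 ≤ p ω) (E : Set Ω) :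
    0 ≤ prEvt p E := by
  apply Finset.sum_nonneg
  intro ω _
  split_ifs
  · exact hp ω
  · exact le_refl 0
lemma prEvt_mono {Ω : Type*} [Fintype Ω] {p : Ω → ℝ} (hp : ∀ ω, 0 ≤ p ω) {E F : Set Ω}
    (h : E ⊆ F) : prEvt p E ≤ prEvt p F := by
  apply Finset.sum_le_sum
  intro ω _
  by_cases hE : ω ∈ E
  · rw [if_pos hE, if_pos (h hE)]
  · rw [if_neg hE]; split_ifs
    · exact hp ω
    · exact le_refl 0
lemma sum_prEvt_inter {Ω α : Type*} [Fintype Ω] [Fintype α] (p : Ω → ℝ) (T : Ω → α)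
    (F : Set Ω) : ∑ v : α, prEvt p ({ω | T ω = v} ∩ F) = prEvt p F := by
  unfold prEvt
  rw [Finset.sum_comm]
  refine Finset.sum_congr rfl fun ω _ => ?_
  by_cases hF : ω ∈ F
  · rw [if_pos hF]
    simp [Set.mem_inter_iff, Set.mem_setOf_eq, hF]
  · rw [if_neg hF]
    refine Finset.sum_eq_zero fun v _ => ?_
    rw [if_neg (fun h => hF h.2)]
lemma sum_prEvt_fiber {Ω κ : Type*} [Fintype Ω] [Fintype κ] (p : Ω → ℝ)
    (hsum : ∑ ω, p ω = 1) (M : Ω → κ) :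
    ∑ k : κ, prEvt p {ω | M ω = k} = 1 := by
  unfold prEvt
  rw [Finset.sum_comm]
  rw [← hsum]
  refine Finset.sum_congr rfl fun ω _ => ?_
  simp [Set.mem_setOf_eq]
lemma perk {Ω : Type*} [Fintype Ω] (p : Ω → ℝ) (hp : ∀ ω, 0 ≤ p ω)
    (n : ℕ) (T : Ω → Fin n → ZMod 2)
    (hunif : ∀ v : Fin n → ZMod 2, prEvt p {ω | T ω = v} = ((2 : ℝ) ^ n)⁻¹)
    (F : Set Ω) (hF : 0 < prEvt p F) :
    ((2 : ℝ) ^ n)⁻¹ * ∑ x : Fin n → ZMod 2,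
        |∑ v : Fin n → ZMod 2, cprEvt p {ω | T ω = v} F * ipSign x v|
      ≤ Real.sqrt (((2 : ℝ) ^ n)⁻¹ / prEvt p F) := by
  have h2n : (0:ℝ) < (2:ℝ)^n := by positivity
  set P := prEvt p F with hPdef
  set q : (Fin n → ZMod 2) → ℝ := fun v => cprEvt p {ω | T ω = v} F with hq
  have hq0 : ∀ v, 0 ≤ q v := fun v => div_nonneg (prEvt_nonneg hp _) hF.le
  have hqsum : ∑ v, q v = 1 := by
    simp only [hq, cprEvt, ← Finset.sum_div]
    rw [sum_prEvt_inter]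
    exact div_self hF.ne'
  have hqle : ∀ v, q v ≤ ((2:ℝ)^n)⁻¹ / P := by
    intro v
    simp only [hq, cprEvt, ← hPdef]
    gcongr
    exact le_trans (prEvt_mono hp Set.inter_subset_left) (hunif v).le
  have hsq : ∑ v, q v ^ 2 ≤ ((2:ℝ)^n)⁻¹ / P := by
    calc ∑ v, q v ^ 2 ≤ ∑ v, (((2:ℝ)^n)⁻¹ / P) * q v := by
          refine Finset.sum_le_sum fun v _ => ?_
          rw [sq]
          exact mul_le_mul_of_nonneg_right (hqle v) (hq0 v)
      _ = (((2:ℝ)^n)⁻¹ / P) * ∑ v, q v := by rw [Finset.mul_sum]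
      _ = ((2:ℝ)^n)⁻¹ / P := by rw [hqsum, mul_one]
  set A := ∑ x : Fin n → ZMod 2, |∑ v, q v * ipSign x v| with hA
  have hA0 : 0 ≤ A := Finset.sum_nonneg fun x _ => abs_nonneg _
  have hcard : ((Finset.univ : Finset (Fin n → ZMod 2)).card : ℝ) = (2:ℝ)^n := by
    rw [Finset.card_univ]
    simp [Fintype.card_fun]
  have hCS : A ^ 2 ≤ (2:ℝ)^n * ((2:ℝ)^n * ∑ v, q v ^ 2) := by
    have h1 := Finset.sum_mul_sq_le_sq_mul_sq Finset.univ (fun _ => (1:ℝ))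
      (fun x : Fin n → ZMod 2 => |∑ v, q v * ipSign x v|)
    simp only [one_mul, one_pow, sq_abs, Finset.sum_const, nsmul_eq_mul, mul_one] at h1
    rw [← hA] at h1
    calc A ^ 2 ≤ ((Finset.univ : Finset (Fin n → ZMod 2)).card : ℝ)
          * ∑ x : Fin n → ZMod 2, (∑ v, q v * ipSign x v) ^ 2 := h1
      _ = (2:ℝ)^n * ((2:ℝ)^n * ∑ v, q v ^ 2) := by rw [hcard, parseval]
  have hA2 : A ^ 2 ≤ (2:ℝ)^n * (2:ℝ)^n * (((2:ℝ)^n)⁻¹ / P) := by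
    calc A ^ 2 ≤ (2:ℝ)^n * ((2:ℝ)^n * ∑ v, q v ^ 2) := hCS
      _ ≤ (2:ℝ)^n * ((2:ℝ)^n * (((2:ℝ)^n)⁻¹ / P)) := by
          gcongr
      _ = (2:ℝ)^n * (2:ℝ)^n * (((2:ℝ)^n)⁻¹ / P) := by ring
  rw [Real.le_sqrt (by positivity) (by positivity)]
  calc (((2:ℝ)^n)⁻¹ * A) ^ 2 = (((2:ℝ)^n)⁻¹)^2 * A ^ 2 := by ring
    _ ≤ (((2:ℝ)^n)⁻¹)^2 * ((2:ℝ)^n * (2:ℝ)^n * (((2:ℝ)^n)⁻¹ / P)) := by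
        gcongr
    _ = ((2:ℝ)^n)⁻¹ / P := by
        field_simp
lemma final_sum {κ : Type*} [Fintype κ] (P D : κ → ℝ) (hP0 : ∀ k, 0 ≤ P k)
    (hPsum : ∑ k, P k = 1) (a : ℝ) (ha : 0 ≤ a)
    (hDk : ∀ k, P k ≠ 0 → D k ≤ Real.sqrt (a / P k))
    (N : ℕ) (hcard : (Finset.univ.filter fun k => P k ≠ 0).card ≤ N) :
    ∑ k, P k * D k ≤ Real.sqrt a * Real.sqrt N := by
  classical
  set S := Finset.univ.filter fun k => P k ≠ 0 with hS
  have step1 : ∑ k, P k * D k = ∑ k ∈ S, P k * D k := by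
    symm
    apply Finset.sum_subset (Finset.filter_subset _ _)
    intro k _ hk
    have : P k = 0 := by simpa [hS] using hk
    rw [this, zero_mul]
  rw [step1]
  have step2 : ∑ k ∈ S, P k * D k ≤ ∑ k ∈ S, Real.sqrt a * Real.sqrt (P k) := by
    refine Finset.sum_le_sum fun k hk => ?_
    have hkne : P k ≠ 0 := (Finset.mem_filter.1 hk).2
    calc P k * D k ≤ P k * Real.sqrt (a / P k) :=
          mul_le_mul_of_nonneg_left (hDk k hkne) (hP0 k)
      _ = Real.sqrt a * (P k / Real.sqrt (P k)) := by
          rw [Real.sqrt_div ha]; ring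
      _ = Real.sqrt a * Real.sqrt (P k) := by rw [Real.div_sqrt]
  have step3 : ∑ k ∈ S, Real.sqrt (P k) ≤ Real.sqrt N := by
    have hCS := Finset.sum_mul_sq_le_sq_mul_sq S (fun _ => (1:ℝ)) (fun k => Real.sqrt (P k))
    simp only [one_mul, one_pow, Finset.sum_const, nsmul_eq_mul, mul_one] at hCS
    have hsq : ∀ k ∈ S, Real.sqrt (P k) ^ 2 = P k := fun k _ => Real.sq_sqrt (hP0 k)
    rw [Finset.sum_congr rfl hsq] at hCS
    have hsub : ∑ k ∈ S, P k ≤ 1 := by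
      rw [← hPsum]
      exact Finset.sum_le_sum_of_subset_of_nonneg (Finset.filter_subset _ _)
        (fun k _ _ => hP0 k)
    rw [Real.le_sqrt (Finset.sum_nonneg fun k _ => Real.sqrt_nonneg _) (by positivity)]
    calc (∑ k ∈ S, Real.sqrt (P k)) ^ 2 ≤ (S.card : ℝ) * ∑ k ∈ S, P k := hCS
      _ ≤ (N : ℝ) * 1 := by
          apply mul_le_mul (by exact_mod_cast hcard) hsub
            (Finset.sum_nonneg fun k _ => hP0 k) (by positivity)
      _ = (N : ℝ) := mul_one _
  calc ∑ k ∈ S, P k * D k ≤ ∑ k ∈ S, Real.sqrt a * Real.sqrt (P k) := step2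
    _ = Real.sqrt a * ∑ k ∈ S, Real.sqrt (P k) := by rw [Finset.mul_sum]
    _ ≤ Real.sqrt a * Real.sqrt N := mul_le_mul_of_nonneg_left step3 (Real.sqrt_nonneg _)

/-- If `T` is uniform on `{0,1}ⁿ` and `M` takes at most `2^c` values, then the expected
one-way discrepancy of inner product (mod 2) against `M` is at most `2^{-(n-c)/2}`. -/
theorem stmt7 {Ω κ : Type*} [Fintype Ω] [Fintype κ]
    (p : Ω → ℝ) (hp : ∀ ω, 0 ≤ p ω) (hsum : ∑ ω, p ω = 1)
    (n c : ℕ) (hn : 0 < n) (hc : 0 < c)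
    (T : Ω → Fin n → ZMod 2)
    (hunif : ∀ v : Fin n → ZMod 2, prEvt p {ω | T ω = v} = ((2 : ℝ) ^ n)⁻¹)
    (M : Ω → κ)
    (hM : (Finset.univ.filter fun k : κ => prEvt p {ω | M ω = k} ≠ 0).card ≤ 2 ^ c) :
    ∑ k : κ, prEvt p {ω | M ω = k} *
        (((2 : ℝ) ^ n)⁻¹ * ∑ x : Fin n → ZMod 2,
          |∑ v : Fin n → ZMod 2, cprEvt p {ω | T ω = v} {ω | M ω = k} * ipSign x v|)
      ≤ (2 : ℝ) ^ (-(((n : ℝ) - (c : ℝ)) / 2)) := by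
  have hfin := final_sum (fun k => prEvt p {ω | M ω = k})
      (fun k => ((2:ℝ)^n)⁻¹ * ∑ x : Fin n → ZMod 2,
        |∑ v : Fin n → ZMod 2, cprEvt p {ω | T ω = v} {ω | M ω = k} * ipSign x v|)
      (fun k => prEvt_nonneg hp _) (sum_prEvt_fiber p hsum M)
      (((2:ℝ)^n)⁻¹) (by positivity)
      (fun k hk => perk p hp n T hunif _ (lt_of_le_of_ne (prEvt_nonneg hp _) (Ne.symm hk)))
      (2^c) hM
  refine hfin.trans (le_of_eq ?_)
  rw [← Real.sqrt_mul (by positivity)]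
  push_cast
  have h1 : ((2:ℝ)^n)⁻¹ * (2:ℝ)^c = (2:ℝ) ^ ((c:ℝ) - (n:ℝ)) := by
    rw [Real.rpow_sub (by norm_num), Real.rpow_natCast, Real.rpow_natCast, div_eq_mul_inv]
    ring
  rw [h1, Real.sqrt_eq_rpow, ← Real.rpow_mul (by norm_num)]
  congr 1
  ring
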